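/- Let m, n ≥ 1 be integers and let G be a simple graph on the vertex set {0, 1, ..., m−1} with no independent set of size n. Color each 3-element subset {v_1, v_2, v_3} of {0, 1, ..., 2^m − 1} with v_1 < v_2 < v_3 red if δ(v_1,v_2) > δ(v_2,v_3) and {δ(v_1,v_2), δ(v_2,v_3)} is an edge of G, and blue otherwise. Then every subset A ⊆ {0,...,2^m − 1} all of whose 3-element subsets are colored blue satisfies |A| ≤ C(m + n − 1, n − 1), where C(·,·) denotes the binomial coefficient. -/

import Mathlib

/-- `δ(u,v)`: the largest index `i` at which the binary expansions of `u` and `v` differ. -/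
noncomputable def bitDelta (u v : ℕ) : ℕ := sSup {i : ℕ | u.testBit i ≠ v.testBit i}

/-!
Induct on a finite set `S` containing every `δ(x, y)` for `x ≠ y` in `A` (initially
`{0, …, m - 1}`), and let `k = max S`. The elements of `A` with bit `k` equal to `0` all lie
below those with bit `k` equal to `1`, and each part has its `δ`s in `S \ {k}`. If the lower part
contains some `u`, then for `x < y` in the upper part the blue triple `u < x < y` has first gap
`δ(u, x) = k > δ(x, y)`, so `δ(x, y)` is not a neighbour of `k`. Among the non-neighbours of `k`
there is no independent set of size `n - 1`, as adding `k` would give one of size `n`. Pascal's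
rule `C(s+n-1, n-1) = C(s+n-2, n-1) + C(s+n-2, n-2)`, with `s = |S|`, closes the induction.
-/

open Finset

section BitDelta

variable {u v k : ℕ}

lemma bddAbove_testBit_ne (u v : ℕ) : BddAbove {i : ℕ | u.testBit i ≠ v.testBit i} := by
  refine ⟨u + v, fun i hi => not_lt.1 fun h => hi ?_⟩
  have hlt : ∀ w ≤ u + v, w < 2 ^ i := fun w hw =>
    Nat.lt_two_pow_self.trans_le (Nat.pow_le_pow_right two_pos (by omega))
  rw [Nat.testBit_lt_two_pow (hlt u (by omega)), Nat.testBit_lt_two_pow (hlt v (by omega))]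

lemma bitDelta_comm (u v : ℕ) : bitDelta u v = bitDelta v u := by
  simp only [bitDelta, ne_comm]

lemma testBit_bitDelta_ne (h : u ≠ v) : u.testBit (bitDelta u v) ≠ v.testBit (bitDelta u v) :=
  Nat.sSup_mem (not_forall_not.1 fun hall => h (Nat.eq_of_testBit_eq fun i => not_not.1 (hall i)))
    (bddAbove_testBit_ne u v)

lemma testBit_eq_of_bitDelta_lt {i : ℕ} (h : bitDelta u v < i) : u.testBit i = v.testBit i :=
  not_not.1 fun hi => h.not_ge (le_csSup (bddAbove_testBit_ne u v) hi)

lemma bitDelta_lt_of_lt_two_pow {m : ℕ} (h : u ≠ v) (hu : u < 2 ^ m) (hv : v < 2 ^ m) :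
    bitDelta u v < m :=
  not_le.1 fun hm => testBit_bitDelta_ne h <| by
    rw [Nat.testBit_lt_two_pow (hu.trans_le (Nat.pow_le_pow_right two_pos hm)),
      Nat.testBit_lt_two_pow (hv.trans_le (Nat.pow_le_pow_right two_pos hm))]

lemma bitDelta_ne_of_testBit_eq (h : u ≠ v) (hk : u.testBit k = v.testBit k) : bitDelta u v ≠ k := by
  rintro rfl
  exact testBit_bitDelta_ne h hk

lemma bitDelta_eq_of_testBit_ne (hk : u.testBit k ≠ v.testBit k) (hle : bitDelta u v ≤ k) :
    bitDelta u v = k :=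
  le_antisymm hle (not_lt.1 fun hlt => hk (testBit_eq_of_bitDelta_lt hlt))

lemma bitDelta_mem_erase_of_testBit_eq {A S : Finset ℕ}
    (hδ : ∀ x ∈ A, ∀ y ∈ A, x ≠ y → bitDelta x y ∈ S) {b : Bool} (hb : ∀ x ∈ A, x.testBit k = b) :
    ∀ x ∈ A, ∀ y ∈ A, x ≠ y → bitDelta x y ∈ S.erase k := fun x hx y hy hxy =>
  mem_erase.2 ⟨bitDelta_ne_of_testBit_eq hxy ((hb x hx).trans (hb y hy).symm), hδ x hx y hy hxy⟩

lemma lt_of_testBit_of_bitDelta_le (hu : u.testBit k = false) (hv : v.testBit k = true)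
    (hle : bitDelta u v ≤ k) : u < v :=
  Nat.lt_of_testBit k hu hv fun _ hj => testBit_eq_of_bitDelta_lt (hle.trans_lt hj)

end BitDelta

namespace SimpleGraph

variable {α : Type*} {G : SimpleGraph α} {s t : Set α} {n : ℕ}

lemma IndepSetFreeOn.mono (h : G.IndepSetFreeOn s n) (hts : t ⊆ s) : G.IndepSetFreeOn t n :=
  fun _ hu => h (hu.trans hts)

lemma IndepSetFreeOn.diff_insert_neighborSet (h : G.IndepSetFreeOn s (n + 1)) {a : α}
    (ha : a ∈ s) : G.IndepSetFreeOn (s \ insert a (G.neighborSet a)) n := by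
  classical
  intro t ht hind
  have hcompl : ∀ b ∈ t, Gᶜ.Adj a b := fun b hb => by
    have hb := ht hb
    simp only [Set.mem_sdiff, Set.mem_insert_iff, mem_neighborSet, not_or] at hb
    exact (compl_adj G a b).2 ⟨Ne.symm hb.2.1, hb.2.2⟩
  refine h ?_ (G.isNClique_compl.1 ((G.isNClique_compl.2 hind).insert hcompl))
  rw [coe_insert]
  exact Set.insert_subset ha (ht.trans Set.sdiff_subset)

end SimpleGraph

def IsBlue (G : SimpleGraph ℕ) (A : Finset ℕ) : Prop :=
  ∀ v₁ ∈ A, ∀ v₂ ∈ A, ∀ v₃ ∈ A, v₁ < v₂ → v₂ < v₃ →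
    ¬ (bitDelta v₂ v₃ < bitDelta v₁ v₂ ∧ G.Adj (bitDelta v₁ v₂) (bitDelta v₂ v₃))

namespace IsBlue

variable {G : SimpleGraph ℕ} {A S : Finset ℕ} {k : ℕ}

lemma mono {B : Finset ℕ} (hA : IsBlue G A) (hB : B ⊆ A) : IsBlue G B :=
  fun _ h₁ _ h₂ _ h₃ => hA _ (hB h₁) _ (hB h₂) _ (hB h₃)

lemma bitDelta_mem_filter_not_adj [DecidablePred (G.Adj k)] (hA : IsBlue G A)
    (hδ : ∀ x ∈ A, ∀ y ∈ A, x ≠ y → bitDelta x y ∈ S) (hk : ∀ i ∈ S, i ≤ k) {u : ℕ} (hu : u ∈ A)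
    (hu' : u.testBit k = false) :
    ∀ x ∈ A.filter (·.testBit k = true), ∀ y ∈ A.filter (·.testBit k = true), x ≠ y →
      bitDelta x y ∈ (S.erase k).filter (¬ G.Adj k ·) := by
  have hδ₁ : ∀ x ∈ A.filter (·.testBit k = true), ∀ y ∈ A.filter (·.testBit k = true), x ≠ y →
      bitDelta x y ∈ S.erase k :=
    bitDelta_mem_erase_of_testBit_eq (fun x hx y hy => hδ x (mem_filter.1 hx).1 y
      (mem_filter.1 hy).1) fun x hx => (mem_filter.1 hx).2
  suffices key : ∀ x ∈ A.filter (·.testBit k = true), ∀ y ∈ A.filter (·.testBit k = true),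
      x < y → ¬ G.Adj k (bitDelta x y) by
    intro x hx y hy hxy
    refine mem_filter.2 ⟨hδ₁ x hx y hy hxy, ?_⟩
    rcases hxy.lt_or_gt with h | h
    · exact key x hx y hy h
    · exact bitDelta_comm x y ▸ key y hy x hx h
  intro x hx y hy hxy hadj
  obtain ⟨hxA, hxk⟩ := mem_filter.1 hx
  have hmem := hδ₁ x hx y hy hxy.ne
  have hux : u ≠ x := by rintro rfl; simp [hxk] at hu'
  have hle := hk _ (hδ u hu x hxA hux)
  refine hA u hu x hxA y (mem_filter.1 hy).1 (lt_of_testBit_of_bitDelta_le hu' hxk hle) hxy ?_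
  rw [bitDelta_eq_of_testBit_ne (by simp [hu', hxk]) hle]
  exact ⟨(hk _ (mem_of_mem_erase hmem)).lt_of_ne (ne_of_mem_erase hmem), hadj⟩

end IsBlue

theorem card_le_choose_of_isBlue {G : SimpleGraph ℕ} (S : Finset ℕ) :
    ∀ (n : ℕ) (A : Finset ℕ), G.IndepSetFreeOn S (n + 1) → IsBlue G A →
      (∀ x ∈ A, ∀ y ∈ A, x ≠ y → bitDelta x y ∈ S) → #A ≤ (#S + n).choose n := by
  classical
  induction S using Finset.strongInduction with | H S ih => ?_
  intro n A hS hA hδ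
  rcases S.eq_empty_or_nonempty with rfl | hne
  · simpa using card_le_one.2 fun x hx y hy => by_contra fun hxy => by simpa using hδ x hx y hy hxy
  set k := S.max' hne
  have hk : k ∈ S := S.max'_mem hne
  obtain _ | n := n
  · exact absurd ⟨by simp, card_singleton k⟩ (hS (by simpa using hk))
  have ih_erase : ∀ B ⊆ A, ∀ b : Bool, (∀ x ∈ B, x.testBit k = b) →
      #B ≤ (#S + n).choose (n + 1) := fun B hB b hb => by
    simpa [← card_erase_add_one hk, add_assoc, add_comm 1] using
      ih (S.erase k) (erase_ssubset hk) (n + 1) B (hS.mono (by simp)) (hA.mono hB)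
        (bitDelta_mem_erase_of_testBit_eq (fun x hx y hy => hδ x (hB hx) y (hB hy)) hb)
  by_cases h₀ : ∃ u ∈ A, u.testBit k = false
  swap
  · push Not at h₀
    exact (ih_erase A subset_rfl true (by simpa using h₀)).trans (Nat.choose_le_choose _ (by omega))
  obtain ⟨u, hu, hu'⟩ := h₀
  set S₁ := (S.erase k).filter (¬ G.Adj k ·)
  have hS₁ : G.IndepSetFreeOn S₁ (n + 1) := (hS.diff_insert_neighborSet hk).mono fun i hi => by
    simp only [S₁, coe_filter, mem_erase] at hi
    simp [hi.1.1, hi.1.2, hi.2]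
  have hA₁ : #(A.filter (·.testBit k = true)) ≤ (#S + n).choose n := by
    refine (ih S₁ ((filter_subset _ _).trans_ssubset (erase_ssubset hk)) n _ hS₁
      (hA.mono (filter_subset _ _)) (hA.bitDelta_mem_filter_not_adj hδ S.le_max' hu hu')).trans
      (Nat.choose_le_choose _ ?_)
    have : #S₁ ≤ #(S.erase k) := card_filter_le _ _
    have := card_erase_add_one hk
    omega
  calc #A = #(A.filter (·.testBit k = true)) + #(A.filter (¬ ·.testBit k = true)) :=
        (card_filter_add_card_filter_not _).symm
    _ ≤ (#S + n).choose n + (#S + n).choose (n + 1) :=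
        add_le_add hA₁ (ih_erase _ (filter_subset _ _) false (by simp))
    _ = (#S + (n + 1)).choose (n + 1) := by rw [← add_assoc, Nat.choose_succ_succ']

theorem stepping_up_no_blue_clique_general (m n : ℕ)
    (G : SimpleGraph ℕ)
    (hind : ∀ s : Finset ℕ, s ⊆ Finset.range m → s.card = n → ∃ u ∈ s, ∃ v ∈ s, G.Adj u v)
    (A : Finset ℕ) (hA : A ⊆ Finset.range (2 ^ m))
    (hblue : ∀ v₁ ∈ A, ∀ v₂ ∈ A, ∀ v₃ ∈ A, v₁ < v₂ → v₂ < v₃ →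
      ¬ (bitDelta v₂ v₃ < bitDelta v₁ v₂ ∧ G.Adj (bitDelta v₁ v₂) (bitDelta v₂ v₃))) :
    A.card ≤ Nat.choose (m + n - 1) (n - 1) := by
  obtain _ | n := n
  · obtain ⟨u, hu, -⟩ := hind ∅ (empty_subset _) rfl
    simp at hu
  have hfree : G.IndepSetFreeOn (range m) (n + 1) := fun t ht hindep => by
    obtain ⟨u, hu, v, hv, huv⟩ := hind t (by exact_mod_cast ht) hindep.card_eq
    exact hindep.isIndepSet hu hv (G.ne_of_adj huv) huv
  have hδ : ∀ x ∈ A, ∀ y ∈ A, x ≠ y → bitDelta x y ∈ range m := fun x hx y hy hxy =>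
    mem_range.2 (bitDelta_lt_of_lt_two_pow hxy (mem_range.1 (hA hx)) (mem_range.1 (hA hy)))
  simpa using card_le_choose_of_isBlue (range m) n A hfree hblue hδ

/-- Let `G` be a graph on `{0, …, m−1}` with no independent set of size `n`.
Color a triple `v₁ < v₂ < v₃` of `{0, …, 2^m − 1}` red iff `δ(v₁,v₂) > δ(v₂,v₃)` and
`{δ(v₁,v₂), δ(v₂,v₃)}` is an edge of `G`, blue otherwise. Then every `A ⊆ {0, …, 2^m − 1}`
all of whose triples are blue satisfies `|A| ≤ C(m + n − 1, n − 1)`. -/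
theorem stepping_up_no_blue_clique (m n : ℕ) (hm : 1 ≤ m) (hn : 1 ≤ n)
    (G : SimpleGraph ℕ)
    (hind : ∀ s : Finset ℕ, s ⊆ Finset.range m → s.card = n → ∃ u ∈ s, ∃ v ∈ s, G.Adj u v)
    (A : Finset ℕ) (hA : A ⊆ Finset.range (2 ^ m))
    (hblue : ∀ v₁ ∈ A, ∀ v₂ ∈ A, ∀ v₃ ∈ A, v₁ < v₂ → v₂ < v₃ →
      ¬ (bitDelta v₂ v₃ < bitDelta v₁ v₂ ∧ G.Adj (bitDelta v₁ v₂) (bitDelta v₂ v₃))) :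
    A.card ≤ Nat.choose (m + n - 1) (n - 1) :=
  stepping_up_no_blue_clique_general m n G hind A hA hblue
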